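/- Let X be a closed subset of ℝ^n, let Σ ⊆ ℝP^{n−1} be the closure of the set of all directions [x−y] of secants of X (x, y ∈ X, x ≠ y), and let π_L : ℝ^n → ℝ^{n−s−1} be a linear projection with center an s-dimensional projective subspace L contained in the hyperplane at infinity. Then π_L restricted to X is a bi-Lipschitz embedding if and only if L ∩ Σ = ∅. -/

import Mathlib

/-! For a linear map `π`, being bi-Lipschitz on `X` amounts to a bound `‖x - y‖ ≤ K ‖π (x - y)‖`
on secants. By homogeneity this is the same bound on the unit secant directions, and, being a
closed condition, on their closure `Σ`; a kernel vector in `Σ` (a unit vector) violates it.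
Conversely `Σ` is a compact subset of the unit sphere, so if `π` does not vanish on `Σ` then
`‖d‖ / ‖π d‖` is bounded there. The bound makes `π` antilipschitz on the complete space `X`,
so the image `π '' X` is closed as well. -/

open Metric Set Filter

noncomputable section

abbrev E (n : ℕ) := EuclideanSpace ℝ (Fin n)

/-- Semialgebraic subsets of ℝⁿ: the boolean algebra generated by polynomial
equalities and inequalities. -/
inductive IsSemialgebraic (n : ℕ) : Set (E n) → Prop
  | zero (p : MvPolynomial (Fin n) ℝ) :
      IsSemialgebraic n {x | MvPolynomial.eval (fun i => x i) p = 0}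
  | pos (p : MvPolynomial (Fin n) ℝ) :
      IsSemialgebraic n {x | 0 < MvPolynomial.eval (fun i => x i) p}
  | union {s t : Set (E n)} : IsSemialgebraic n s → IsSemialgebraic n t →
      IsSemialgebraic n (s ∪ t)
  | inter {s t : Set (E n)} : IsSemialgebraic n s → IsSemialgebraic n t →
      IsSemialgebraic n (s ∩ t)
  | compl {s : Set (E n)} : IsSemialgebraic n s → IsSemialgebraic n sᶜ

/-- A map is semialgebraic on `s` if its graph over `s` is semialgebraic. -/
def IsSemialgebraicOn {m n : ℕ} (f : E m → E n) (s : Set (E m)) : Prop :=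
  IsSemialgebraic (m + n)
    {z : E (m + n) | (WithLp.toLp 2 (fun i : Fin m => z (Fin.castAdd n i)) : E m) ∈ s ∧
      ∀ j : Fin n, f (WithLp.toLp 2 (fun i : Fin m => z (Fin.castAdd n i))) j = z (Fin.natAdd m j)}

/-- A real-valued function on ℝⁿ is semialgebraic if its graph is semialgebraic. -/
def IsSemialgebraicFun (n : ℕ) (p : E n → ℝ) : Prop :=
  IsSemialgebraic (n + 1)
    {z : E (n + 1) | p (WithLp.toLp 2 (fun i : Fin n => z (Fin.castAdd 1 i))) = z (Fin.natAdd n 0)}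

/-- `f` is bi-Lipschitz on `s` (with respect to the outer metrics). -/
def IsBiLipschitzOn {α β : Type*} [PseudoMetricSpace α] [PseudoMetricSpace β]
    (f : α → β) (s : Set α) : Prop :=
  ∃ C : ℝ, 1 ≤ C ∧ ∀ x ∈ s, ∀ y ∈ s,
    dist x y ≤ C * dist (f x) (f y) ∧ dist (f x) (f y) ≤ C * dist x y

/-- A bi-Lipschitz embedding: bi-Lipschitz onto its image, which is closed. -/
def IsBiLipschitzEmbedding {m n : ℕ} (f : E m → E n) (s : Set (E m)) : Prop :=
  IsBiLipschitzOn f s ∧ IsClosed (f '' s)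

/-- A triangular bi-Lipschitz map: `(x₁,…,xₙ) ↦ (x₁,…,x_{n-1}, xₙ + p(x₁,…,x_{n-1}))`
with `p` Lipschitz (i.e. `p` depends only on the first `n-1` coordinates). -/
def IsTriangular (n : ℕ) (F : E n → E n) : Prop :=
  ∃ p : E n → ℝ, (∃ K : NNReal, LipschitzWith K p) ∧
    (∀ x y : E n, (∀ i : Fin n, (i : ℕ) + 1 < n → x i = y i) → p x = p y) ∧
    ∀ (x : E n) (i : Fin n), F x i = x i + (if (i : ℕ) + 1 = n then p x else 0)

/-- Tame bi-Lipschitz homeomorphisms of ℝⁿ: compositions of triangular maps and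
linear maps of determinant one. -/
inductive IsTame (n : ℕ) : (E n → E n) → Prop
  | triangular {F : E n → E n} : IsTriangular n F → IsTame n F
  | linear (A : E n →ₗ[ℝ] E n) (h : LinearMap.det A = 1) : IsTame n (A : E n → E n)
  | comp {F G : E n → E n} : IsTame n F → IsTame n G → IsTame n (F ∘ G)

/-- Triangular maps whose shift function is moreover semialgebraic. -/
def IsTriangularSA (n : ℕ) (F : E n → E n) : Prop :=
  IsTriangular n F ∧ ∃ p : E n → ℝ, IsSemialgebraicFun n p ∧ (∃ K : NNReal, LipschitzWith K p) ∧
    (∀ x y : E n, (∀ i : Fin n, (i : ℕ) + 1 < n → x i = y i) → p x = p y) ∧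
    ∀ (x : E n) (i : Fin n), F x i = x i + (if (i : ℕ) + 1 = n then p x else 0)

/-- Tame semialgebraic bi-Lipschitz homeomorphisms: compositions of semialgebraic
triangular maps and linear maps of determinant one. -/
inductive IsTameSA (n : ℕ) : (E n → E n) → Prop
  | triangular {F : E n → E n} : IsTriangularSA n F → IsTameSA n F
  | linear (A : E n →ₗ[ℝ] E n) (h : LinearMap.det A = 1) : IsTameSA n (A : E n → E n)
  | comp {F G : E n → E n} : IsTameSA n F → IsTameSA n G → IsTameSA n (F ∘ G)

/-- The projection of ℝⁿ onto the first `l` coordinates, viewed as ℝˡ × {0} ⊆ ℝⁿ. -/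
def projE (n l : ℕ) : E n → E n :=
  fun x => WithLp.toLp 2 (fun i : Fin n => if (i : ℕ) < l then x i else 0 : Fin n → ℝ)
/-- The closure of the set of (normalized) directions of secants of `X`. -/
def secantDirections (n : ℕ) (X : Set (E n)) : Set (E n) :=
  closure {d : E n | ∃ x ∈ X, ∃ y ∈ X, x ≠ y ∧ d = ‖x - y‖⁻¹ • (x - y)}


section UnitSecants

variable {E F : Type*} [NormedAddCommGroup E] [NormedSpace ℝ E]
  [NormedAddCommGroup F] [NormedSpace ℝ F]

def unitSecants (X : Set E) : Set E :=
  {d | ∃ x ∈ X, ∃ y ∈ X, x ≠ y ∧ d = ‖x - y‖⁻¹ • (x - y)}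

theorem unitSecants_subset_sphere (X : Set E) : unitSecants X ⊆ sphere (0 : E) 1 := by
  rintro _ ⟨x, -, y, -, hxy, rfl⟩
  simp [norm_smul, sub_ne_zero.mpr hxy]

theorem closure_unitSecants_subset_sphere (X : Set E) :
    closure (unitSecants X) ⊆ sphere (0 : E) 1 :=
  closure_minimal (unitSecants_subset_sphere X) isClosed_sphere

theorem isCompact_closure_unitSecants [ProperSpace E] (X : Set E) :
    IsCompact (closure (unitSecants X)) :=
  (isCompact_sphere 0 1).of_isClosed_subset isClosed_closure
    (closure_unitSecants_subset_sphere X)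

theorem forall_norm_sub_le_mul_iff_closure_unitSecants (f : E →L[ℝ] F) (X : Set E) (K : ℝ) :
    (∀ x ∈ X, ∀ y ∈ X, ‖x - y‖ ≤ K * ‖f (x - y)‖) ↔
      ∀ d ∈ closure (unitSecants X), ‖d‖ ≤ K * ‖f d‖ := by
  constructor
  · intro h
    refine closure_minimal ?_ (isClosed_le continuous_norm (by fun_prop))
    rintro _ ⟨x, hx, y, hy, -, rfl⟩
    calc ‖‖x - y‖⁻¹ • (x - y)‖ = ‖x - y‖⁻¹ * ‖x - y‖ := by simp [norm_smul]
      _ ≤ ‖x - y‖⁻¹ * (K * ‖f (x - y)‖) := by gcongr; exact h x hx y hy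
      _ = K * ‖f (‖x - y‖⁻¹ • (x - y))‖ := by simp [norm_smul]; ring
  · intro h x hx y hy
    rcases eq_or_ne x y with rfl | hxy
    · simp
    have hd := h _ (subset_closure ⟨x, hx, y, hy, hxy, rfl⟩)
    have hpos : 0 < ‖x - y‖ := norm_pos_iff.mpr (sub_ne_zero.mpr hxy)
    simp only [map_smul, norm_smul, norm_inv, norm_norm, inv_mul_cancel₀ hpos.ne'] at hd
    calc ‖x - y‖ = ‖x - y‖ * 1 := (mul_one _).symm
      _ ≤ ‖x - y‖ * (K * (‖x - y‖⁻¹ * ‖f (x - y)‖)) := by gcongr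
      _ = K * ‖f (x - y)‖ := by field_simp

theorem IsCompact.exists_norm_le_mul_norm_apply {K : Set E} (hK : IsCompact K) (f : E →L[ℝ] F)
    (hf : ∀ d ∈ K, f d ≠ 0) : ∃ C : ℝ, ∀ d ∈ K, ‖d‖ ≤ C * ‖f d‖ := by
  have hcont : ContinuousOn (fun d => ‖d‖ / ‖f d‖) K :=
    continuous_norm.continuousOn.div (by fun_prop) fun d hd => norm_ne_zero_iff.mpr (hf d hd)
  obtain ⟨C, hC⟩ := hK.exists_bound_of_continuousOn hcont
  refine ⟨C, fun d hd => ?_⟩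
  have hpos : 0 < ‖f d‖ := norm_pos_iff.mpr (hf d hd)
  rw [← div_le_iff₀ hpos]
  simpa using hC d hd

theorem isBiLipschitzOn_of_norm_sub_le_mul (f : E →L[ℝ] F) {X : Set E} {K : ℝ}
    (h : ∀ x ∈ X, ∀ y ∈ X, ‖x - y‖ ≤ K * ‖f (x - y)‖) : IsBiLipschitzOn f X := by
  refine ⟨max (max K ‖f‖) 1, le_max_right _ _, fun x hx y hy => ?_⟩
  simp only [dist_eq_norm, ← map_sub]
  constructor
  · calc ‖x - y‖ ≤ K * ‖f (x - y)‖ := h x hx y hy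
      _ ≤ max (max K ‖f‖) 1 * ‖f (x - y)‖ := by
        gcongr; exact (le_max_left _ _).trans (le_max_left _ _)
  · calc ‖f (x - y)‖ ≤ ‖f‖ * ‖x - y‖ := f.le_opNorm _
      _ ≤ max (max K ‖f‖) 1 * ‖x - y‖ := by
        gcongr; exact (le_max_right _ _).trans (le_max_left _ _)

theorem isClosed_image_of_norm_sub_le_mul [CompleteSpace E] (f : E →L[ℝ] F) {X : Set E} {K : ℝ}
    (hX : IsClosed X) (h : ∀ x ∈ X, ∀ y ∈ X, ‖x - y‖ ≤ K * ‖f (x - y)‖) :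
    IsClosed (f '' X) := by
  have : CompleteSpace X := hX.completeSpace_coe
  have hanti : AntilipschitzWith K.toNNReal (X.domRestrict f) :=
    AntilipschitzWith.of_le_mul_dist fun x y => by
      rw [Subtype.dist_eq, dist_eq_norm, dist_eq_norm, Set.domRestrict_apply,
        Set.domRestrict_apply, ← map_sub]
      exact (h x x.2 y y.2).trans (by gcongr; exact Real.le_coe_toNNReal K)
  rw [← Set.range_domRestrict]
  exact hanti.isClosed_range (f.uniformContinuous.comp uniformContinuous_subtype_val)

end UnitSecants

theorem stmt_7_general (n s : ℕ) (X : Set (E n)) (hX : IsClosed X)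
    (π : E n →ₗ[ℝ] E (n - s - 1)) :
    IsBiLipschitzEmbedding (π : E n → E (n - s - 1)) X ↔
      ∀ d ∈ secantDirections n X, d ∉ LinearMap.ker π := by
  set f := LinearMap.toContinuousLinearMap π
  change IsBiLipschitzEmbedding f X ↔ ∀ d ∈ closure (unitSecants X), f d ≠ 0
  constructor
  · rintro ⟨⟨C, -, hC⟩, -⟩ d hd hfd
    have hbound := (forall_norm_sub_le_mul_iff_closure_unitSecants f X C).1
      (fun x hx y hy => by simpa only [dist_eq_norm, map_sub] using (hC x hx y hy).1) d hd
    rw [hfd, norm_zero, mul_zero, mem_sphere_zero_iff_norm.mp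
      (closure_unitSecants_subset_sphere X hd)] at hbound
    exact one_pos.not_ge hbound
  · intro h
    obtain ⟨K, hK⟩ := (isCompact_closure_unitSecants X).exists_norm_le_mul_norm_apply f h
    have hsecant := (forall_norm_sub_le_mul_iff_closure_unitSecants f X K).2 hK
    exact ⟨isBiLipschitzOn_of_norm_sub_le_mul f hsecant,
      isClosed_image_of_norm_sub_le_mul f hX hsecant⟩

/-- A linear projection with center an `s`-dimensional projective subspace `L` at
infinity (i.e. with `(s+1)`-dimensional kernel) restricts to a bi-Lipschitz embedding
of the closed set `X` iff `L` is disjoint from the closure `Σ` of secant directions. -/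
theorem stmt_7 (n s : ℕ) (hs : s + 1 < n) (X : Set (E n)) (hX : IsClosed X)
    (π : E n →ₗ[ℝ] E (n - s - 1)) (hsurj : Function.Surjective π)
    (hker : Module.finrank ℝ (LinearMap.ker π) = s + 1) :
    IsBiLipschitzEmbedding (π : E n → E (n - s - 1)) X ↔
      ∀ d ∈ secantDirections n X, d ∉ LinearMap.ker π :=
  stmt_7_general n s X hX π
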